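/- Let G=(V,E) be a finite simple graph, A ⊆ V, and C ⊆ V. Let v ∈ C be a vertex of degree one in G with v ∉ A, let X be the vertex set of the connected component of G−(C\{v}) containing v, and let w be the unique neighbor of v in G with w ∈ A. If |X| = 2 (i.e., X = {v,w}), then the graphs G−C and G−C' with C' := (C\{v}) ∪ {w} have the same A-vulnerability and the same A-healthiness, and hence Φ(G−C') = Φ(G−C). (Subcase |X|=2 of Case 2 in the proof of Proposition 1.) -/

import Mathlib

/-- The graph obtained from `G` by deleting the vertices in `C` (removing all
edges incident to `C`; the remaining adjacency is that of the induced subgraph on `Cᶜ`). -/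
def delVerts {V : Type*} (G : SimpleGraph V) (C : Set V) : SimpleGraph V where
  Adj u v := G.Adj u v ∧ u ∉ C ∧ v ∉ C
  symm := ⟨fun u v h => ⟨h.1.symm, h.2.2, h.2.1⟩⟩
  loopless := ⟨fun u h => G.irrefl h.1⟩

/-- The set of unordered pairs of distinct vertices forming a vulnerable connection:
joined by a path, and at least one endpoint is attacked. -/
def vulPairs {V : Type*} (G : SimpleGraph V) (A : Set V) : Set (Sym2 V) :=
  {p | ∃ u v, p = s(u, v) ∧ u ≠ v ∧ G.Reachable u v ∧ (u ∈ A ∨ v ∈ A)}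

/-- The `A`-vulnerability of a graph. -/
noncomputable def vul {V : Type*} (G : SimpleGraph V) (A : Set V) : ℕ :=
  (vulPairs G A).ncard

/-- The set of unordered pairs of distinct vertices forming a healthy connection:
joined by a path, and no endpoint is attacked. -/
def healPairs {V : Type*} (G : SimpleGraph V) (A : Set V) : Set (Sym2 V) :=
  {p | ∃ u v, p = s(u, v) ∧ u ≠ v ∧ G.Reachable u v ∧ u ∉ A ∧ v ∉ A}

/-- The `A`-healthiness of a graph. -/
noncomputable def heal {V : Type*} (G : SimpleGraph V) (A : Set V) : ℕ :=
  (healPairs G A).ncard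

/-- The objective value `Φ(G−C) = (|V|²+1)·vul(G−C) − heal(G−C)`, as an integer. -/
noncomputable def Phi {V : Type*} [Fintype V] (G : SimpleGraph V) (A C : Set V) : ℤ :=
  ((Fintype.card V : ℤ) ^ 2 + 1) * (vul (delVerts G C) A : ℤ) - (heal (delVerts G C) A : ℤ)

/-- The vertex set of the connected component of `v` in `H` (including `v`). -/
def comp {V : Type*} (H : SimpleGraph V) (v : V) : Set V :=
  {u | H.Reachable v u}

/-- Subcase `|X| = 2` of Case 2 in the proof of Proposition 1. -/
theorem case_two_component_of_size_two
    {V : Type*} [Fintype V] (G : SimpleGraph V) (A C : Set V) (v w : V)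
    (hvC : v ∈ C) (hvA : v ∉ A)
    (hw : ∀ u, G.Adj v u ↔ u = w)
    (X : Set V) (hX : X = comp (delVerts G (C \ {v})) v)
    (hwA : w ∈ A) (hX2 : X.ncard = 2) :
    vul (delVerts G ((C \ {v}) ∪ {w})) A = vul (delVerts G C) A ∧
      heal (delVerts G ((C \ {v}) ∪ {w})) A = heal (delVerts G C) A ∧
      Phi G A ((C \ {v}) ∪ {w}) = Phi G A C := by
  have hadj : G.Adj v w := (hw w).mpr rfl
  have hvw : v ≠ w := hadj.ne
  have hwC : w ∉ C \ {v} := by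
    intro hwmem
    have hXv : X = {v} := by
      rw [hX]
      ext u
      simp only [comp, Set.mem_setOf_eq, Set.mem_singleton_iff]
      constructor
      · intro hr
        obtain ⟨p⟩ := hr
        cases p with
        | nil => rfl
        | cons h q =>
          have hx := (hw _).mp h.1
          exact absurd (hx ▸ h.2.2) (fun h' => h' hwmem)
      · rintro rfl; exact SimpleGraph.Reachable.refl _
    rw [hXv, Set.ncard_singleton] at hX2
    omega
  have hvnot : v ∉ C \ {v} := by simp
  have hvX : v ∈ X := by rw [hX]; exact SimpleGraph.Reachable.refl v
  have hwX : w ∈ X := by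
    rw [hX]
    exact SimpleGraph.Adj.reachable ⟨hadj, hvnot, hwC⟩
  have hXeq : X = {v, w} := by
    refine (Set.eq_of_subset_of_ncard_le ?_ ?_ (Set.toFinite X)).symm
    · intro u hu
      simp only [Set.mem_insert_iff, Set.mem_singleton_iff] at hu
      rcases hu with rfl | rfl
      · exact hvX
      · exact hwX
    · rw [Set.ncard_pair hvw, hX2]
  have key : ∀ u u', G.Adj u u' → u' ∉ C → u = w → False := by
    rintro u u' ha hu' rfl
    have hu'X : u' ∈ X := by
      rw [hX]
      have h1 : (delVerts G (C \ {v})).Adj v u := ⟨hadj, hvnot, hwC⟩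
      have h2 : (delVerts G (C \ {v})).Adj u u' := ⟨ha, hwC, fun h => hu' h.1⟩
      exact h1.reachable.trans h2.reachable
    rw [hXeq] at hu'X
    simp only [Set.mem_insert_iff, Set.mem_singleton_iff] at hu'X
    rcases hu'X with rfl | rfl
    · exact hu' hvC
    · exact G.irrefl ha
  have hG : delVerts G ((C \ {v}) ∪ {w}) = delVerts G C := by
    ext u u'
    show (G.Adj u u' ∧ _ ∧ _) ↔ (G.Adj u u' ∧ _ ∧ _)
    constructor
    · rintro ⟨ha, hu, hu'⟩
      refine ⟨ha, ?_, ?_⟩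
      · intro huC
        have huv : u = v := by
          by_contra h
          exact hu (Or.inl ⟨huC, h⟩)
        subst huv
        exact hu' (Or.inr ((hw u').mp ha))
      · intro hu'C
        have hu'v : u' = v := by
          by_contra h
          exact hu' (Or.inl ⟨hu'C, h⟩)
        subst hu'v
        exact hu (Or.inr ((hw u).mp ha.symm))
    · rintro ⟨ha, hu, hu'⟩
      refine ⟨ha, ?_, ?_⟩
      · rintro (h | h)
        · exact hu h.1
        · exact key u u' ha hu' h
      · rintro (h | h)
        · exact hu' h.1
        · exact key u' u ha.symm hu h
  refine ⟨by rw [hG], by rw [hG], ?_⟩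
  simp only [Phi, hG]
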